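/- arXiv:0811.1570 — 5 statements merged into one kernel-verified Lean document; each statement's English description precedes it below -/
import Mathlib

section
/- Euclidean construction of subsystem codes: Let q be a prime power and let C be a k'-dimensional F_q-linear code of length n whose subcode D = C ∩ C^⊥ has dimension k'', where k' + k'' < n. Then there exists an F_q-linear [[n, n−(k'+k''), k'−k'', d]]_q Clifford subsystem code, where d = wt(D^⊥ \ C) is the minimum Hamming weight of a vector lying in D^⊥ but not in C. -/
open Finset

/-- Symplectic weight of a vector `(a|b) ∈ F_q^n × F_q^n`. -/
noncomputable def swt {F : Type} [Field F] {n : ℕ} (v : (Fin n → F) × (Fin n → F)) : ℕ :=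
  {i : Fin n | ¬(v.1 i = 0 ∧ v.2 i = 0)}.ncard

/-- Minimum symplectic weight of a nonzero element of a set. -/
noncomputable def minSwt {F : Type} [Field F] {n : ℕ} (S : Set ((Fin n → F) × (Fin n → F))) : ℕ :=
  sInf (swt '' (S \ {0}))

/-- The trace-symplectic form on `F_q^{2n}`. -/
noncomputable def trSympForm (p : ℕ) {F : Type} [Field F] [Fintype F] [CharP F p] {n : ℕ}
    (u v : (Fin n → F) × (Fin n → F)) : ZMod p :=
  letI := ZMod.algebra F p
  Algebra.trace (ZMod p) F (∑ i, (v.1 i * u.2 i - u.1 i * v.2 i))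

/-- The trace-symplectic dual of a set of vectors in `F_q^{2n}`. -/
def sympDual (p : ℕ) {F : Type} [Field F] [Fintype F] [CharP F p] {n : ℕ}
    (C : Set ((Fin n → F) × (Fin n → F))) : Set ((Fin n → F) × (Fin n → F)) :=
  {v | ∀ w ∈ C, trSympForm p v w = 0}

/-- `C` (an additive code in `F_q^{2n}`) defines an `((n,K,R,d))_q` Clifford subsystem code. -/
def IsSubsysCode (p : ℕ) {F : Type} [Field F] [Fintype F] [CharP F p] {n : ℕ}
    (C : AddSubgroup ((Fin n → F) × (Fin n → F))) (K R d : ℕ) : Prop :=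
  let Ds : Set ((Fin n → F) × (Fin n → F)) := ↑C ∩ sympDual p ↑C
  Nat.card Ds * (K * R) = Fintype.card F ^ n ∧
  Nat.card C * K = Fintype.card F ^ n * R ∧
  (sympDual p Ds = ↑C → d = minSwt (sympDual p Ds)) ∧
  (sympDual p Ds ≠ ↑C → d = minSwt (sympDual p Ds \ ↑C))

/-- The subsystem code defined by `C` is pure to `d'`. -/
def PureTo {F : Type} [Field F] {n : ℕ}
    (C : AddSubgroup ((Fin n → F) × (Fin n → F))) (d' : ℕ) : Prop :=
  ∀ v ∈ C, v ≠ 0 → d' ≤ swt v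

/-- The subsystem code defined by `C` is `F_q`-linear. -/
def FqLinear {F : Type} [Field F] {n : ℕ}
    (C : AddSubgroup ((Fin n → F) × (Fin n → F))) : Prop :=
  ∀ (a : F), ∀ v ∈ C, a • v ∈ C

/-- Hamming weight.-/
noncomputable def hwt {F : Type} [Field F] {n : ℕ} (v : Fin n → F) : ℕ := {i | v i ≠ 0}.ncard

/-- Minimum Hamming weight of a nonzero element of a set. -/
noncomputable def minHwt {F : Type} [Field F] {n : ℕ} (S : Set (Fin n → F)) : ℕ :=
  sInf (hwt '' (S \ {0}))

/-- Euclidean dual. -/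
def euclDual {F : Type} [Field F] {n : ℕ} (C : Set (Fin n → F)) : Set (Fin n → F) :=
  {x | ∀ y ∈ C, ∑ i, x i * y i = 0}

/-- Hermitian dual (with respect to `x ↦ x^q`). -/
def hermDual (q : ℕ) {K : Type} [Field K] {n : ℕ} (C : Set (Fin n → K)) : Set (Fin n → K) :=
  {x | ∀ y ∈ C, ∑ i, x i ^ q * y i = 0}

/-- Cyclotomic coset of `a` modulo `n` (w.r.t. multiplier `q`). -/
def cycCoset (q n : ℕ) (a : ZMod n) : Set (ZMod n) := {x | ∃ i : ℕ, x = a * (q : ZMod n) ^ i}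

/-!
Take `Q = C × C ⊆ F_q^{2n}`. Nondegeneracy of the trace of `F_q / F_p` shows that the
trace-symplectic dual of `A × B` is `B^⊥ × A^⊥`, so `Q ∩ Q^⊥s = D × D` (using `D = C ∩ C^⊥`) and
`(D × D)^⊥s = D^⊥ × D^⊥`, which is not `Q` because `dim D^⊥ = n - k'' > k'`. The sizes
`|D × D| = q^{2k''}` and `|Q| = q^{2k'}` give `K` and `R`. Finally a vector of `D^⊥ × D^⊥` outside
`C × C` has a component in `D^⊥ \ C` of Hamming weight at most its symplectic weight, while
`v ∈ D^⊥ \ C` gives `(v, 0)` of the same weight, so the two minimum weights agree.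
-/

open Matrix LinearMap.BilinForm

section Euclidean

variable {F : Type} [Field F] {n : ℕ}

local notation "dot" => (dotProductBilin F F : LinearMap.BilinForm F (Fin n → F))

lemma dotProductBilin_nondegenerate : Nondegenerate dot :=
  ⟨fun x hx => dotProduct_eq_zero x hx,
    fun y hy => dotProduct_eq_zero y fun x => by simpa [dotProduct_comm] using hy x⟩

lemma euclDual_eq_orthogonal (A : Submodule F (Fin n → F)) :
    euclDual (A : Set (Fin n → F)) = (orthogonal dot A : Set (Fin n → F)) := by
  ext x
  simp only [euclDual, SetLike.mem_coe, mem_orthogonal_iff, dotProductBilin_apply_apply,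
    dotProduct_comm _ x]
  rfl

lemma finrank_orthogonal_dotProductBilin (A : Submodule F (Fin n → F)) :
    Module.finrank F (orthogonal dot A) = n - Module.finrank F A := by
  rw [finrank_orthogonal dotProductBilin_nondegenerate, Module.finrank_fin_fun]

lemma not_orthogonal_le_of_finrank_add_lt {C D : Submodule F (Fin n → F)}
    (hlt : Module.finrank F C + Module.finrank F D < n) : ¬ orthogonal dot D ≤ C := fun hle => by
  have := Submodule.finrank_mono hle
  rw [finrank_orthogonal_dotProductBilin] at this
  omega

end Euclidean

section Symplectic

variable {F : Type} [Field F] [Fintype F] {n : ℕ} (p : ℕ) [CharP F p]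

local notation "dot" => (dotProductBilin F F : LinearMap.BilinForm F (Fin n → F))

lemma eq_zero_of_forall_trace_mul_eq_zero {s : F}
    (h : ∀ a : F, (letI := ZMod.algebra F p; Algebra.trace (ZMod p) F (a * s)) = 0) : s = 0 := by
  have := Fact.mk (CharP.char_is_prime F p)
  let := ZMod.algebra F p
  exact (traceForm_nondegenerate (ZMod p) F).1 s fun a => by
    rw [Algebra.traceForm_apply, mul_comm, h]

lemma trSympForm_eq (u v : (Fin n → F) × (Fin n → F)) :
    letI := ZMod.algebra F p
    trSympForm p u v = Algebra.trace (ZMod p) F (v.1 ⬝ᵥ u.2 - u.1 ⬝ᵥ v.2) := by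
  simp only [trSympForm, dotProduct, Finset.sum_sub_distrib]

/-- Test `u` against `(a • x, 0)` and `(0, a • y)` for all scalars `a`: nondegeneracy of the
trace forces each dot product to vanish separately. -/
lemma sympDual_prod (A B : Submodule F (Fin n → F)) :
    sympDual p (A.prod B : Set ((Fin n → F) × (Fin n → F))) =
      ((orthogonal dot B).prod (orthogonal dot A) : Set ((Fin n → F) × (Fin n → F))) := by
  let := ZMod.algebra F p
  ext u
  simp only [sympDual, Set.mem_ofPred_eq, SetLike.mem_coe, Submodule.mem_prod, Prod.forall,
    trSympForm_eq, mem_orthogonal_iff, dotProductBilin_apply_apply]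
  constructor
  · intro hu
    refine ⟨fun y hy => eq_zero_of_forall_trace_mul_eq_zero p fun a => ?_,
      fun x hx => eq_zero_of_forall_trace_mul_eq_zero p fun a => ?_⟩
    · simpa [dotProduct_comm u.1] using hu 0 (a • y) ⟨A.zero_mem, B.smul_mem a hy⟩
    · simpa [smul_dotProduct] using hu (a • x) 0 ⟨A.smul_mem a hx, B.zero_mem⟩
  · rintro ⟨hu₁, hu₂⟩ x y ⟨hx, hy⟩
    rw [hu₂ x hx, dotProduct_comm, hu₁ y hy, sub_zero, map_zero]

end Symplectic

section Weight

variable {F : Type} [Field F] {n : ℕ}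

lemma swt_mk_zero (v : Fin n → F) : swt (v, 0) = hwt v := by
  simp [swt, hwt]

lemma hwt_fst_le_swt (u : (Fin n → F) × (Fin n → F)) : hwt u.1 ≤ swt u :=
  Set.ncard_le_ncard (fun _ hi hc => hi hc.1) (Set.toFinite _)

lemma hwt_snd_le_swt (u : (Fin n → F) × (Fin n → F)) : hwt u.2 ≤ swt u :=
  Set.ncard_le_ncard (fun _ hi hc => hi hc.2) (Set.toFinite _)

lemma minSwt_prod_diff_prod {S T : Set (Fin n → F)} (hS : 0 ∈ S) (hT : 0 ∈ T) :
    minSwt (S ×ˢ S \ T ×ˢ T) = minHwt (S \ T) := by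
  refine csInf_eq_csInf_of_forall_exists_le ?_ ?_
  · rintro _ ⟨u, ⟨⟨⟨hu₁, hu₂⟩, huT⟩, -⟩, rfl⟩
    by_cases h₁ : u.1 ∈ T
    · have h₂ : u.2 ∉ T := fun h₂ => huT ⟨h₁, h₂⟩
      exact ⟨_, ⟨u.2, ⟨⟨hu₂, h₂⟩, fun h => h₂ (h ▸ hT)⟩, rfl⟩, hwt_snd_le_swt u⟩
    · exact ⟨_, ⟨u.1, ⟨⟨hu₁, h₁⟩, fun h => h₁ (h ▸ hT)⟩, rfl⟩, hwt_fst_le_swt u⟩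
  · rintro _ ⟨v, ⟨⟨hvS, hvT⟩, -⟩, rfl⟩
    have hv : (v, (0 : Fin n → F)) ≠ 0 := fun h => hvT ((Prod.mk_eq_zero.mp h).1 ▸ hT)
    exact ⟨_, ⟨(v, 0), ⟨⟨⟨hvS, hS⟩, fun h => hvT h.1⟩, hv⟩, rfl⟩, (swt_mk_zero v).le⟩

end Weight

section Card

variable {F : Type} [Field F] [Fintype F]

lemma natCard_submodule {V : Type*} [AddCommGroup V] [Module F V] [Finite V]
    (A : Submodule F V) : Nat.card A = Fintype.card F ^ Module.finrank F A := by
  have := Fintype.ofFinite A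
  rw [Nat.card_eq_fintype_card, Module.card_eq_pow_finrank (K := F)]

lemma natCard_prod {V W : Type*} [AddCommGroup V] [Module F V] [Finite V] [AddCommGroup W]
    [Module F W] [Finite W] (A : Submodule F V) (B : Submodule F W) :
    Nat.card (A.prod B : Set (V × W)) =
      Fintype.card F ^ (Module.finrank F A + Module.finrank F B) := by
  rw [Submodule.prod_coe, Nat.card_congr (Equiv.Set.prod _ _), Nat.card_prod, pow_add,
    ← natCard_submodule A, ← natCard_submodule B]
  rfl

end Card

theorem euclidean_construction_of_subsystem_codes_general
    (p : ℕ) (F : Type) [Field F] [Fintype F] [CharP F p]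
    (n k' k'' : ℕ) (C D : Submodule F (Fin n → F))
    (hD : (D : Set (Fin n → F)) = ↑C ∩ euclDual ↑C)
    (hk' : Module.finrank F C = k') (hk'' : Module.finrank F D = k'')
    (hlt : k' + k'' < n) :
    ∃ Q : AddSubgroup ((Fin n → F) × (Fin n → F)),
      IsSubsysCode p Q (Fintype.card F ^ (n - (k' + k'')))
        (Fintype.card F ^ (k' - k''))
        (minHwt (euclDual (↑D : Set (Fin n → F)) \ ↑C)) ∧
      FqLinear Q := by
  set dot := (dotProductBilin F F : LinearMap.BilinForm F (Fin n → F))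
  have hDC : D = C ⊓ orthogonal dot C :=
    SetLike.coe_injective (by rw [hD, euclDual_eq_orthogonal, Submodule.coe_inf])
  have hk''k' : k'' ≤ k' := hk' ▸ hk'' ▸ Submodule.finrank_mono (hDC ▸ inf_le_left)
  let Q := (C.prod C).toAddSubgroup
  have hQ : (Q : Set ((Fin n → F) × (Fin n → F))) = ↑(C.prod C) := rfl
  have hDs : (Q : Set ((Fin n → F) × (Fin n → F))) ∩ sympDual p Q = ↑(D.prod D) := by
    rw [hQ, sympDual_prod, ← Submodule.coe_inf, Submodule.prod_inf_prod, hDC]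
  refine ⟨Q, ?_, fun a v hv => (C.prod C).smul_mem a hv⟩
  dsimp only [IsSubsysCode]
  rw [hDs, sympDual_prod, hQ]
  have hne : ((orthogonal dot D).prod (orthogonal dot D) : Set ((Fin n → F) × (Fin n → F))) ≠
      ↑(C.prod C) := fun h =>
    not_orthogonal_le_of_finrank_add_lt (hk' ▸ hk'' ▸ hlt) fun x hx =>
      (h ▸ ⟨hx, zero_mem _⟩ : (x, 0) ∈ (C.prod C : Set ((Fin n → F) × (Fin n → F)))).1
  refine ⟨?_, ?_, fun h => absurd h hne, fun _ => ?_⟩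
  · rw [natCard_prod, hk'', ← pow_add, ← pow_add]
    congr 1
    omega
  · show Nat.card (C.prod C : Set ((Fin n → F) × (Fin n → F))) * _ = _
    rw [natCard_prod, hk', ← pow_add, ← pow_add]
    congr 1
    omega
  · rw [Submodule.prod_coe, Submodule.prod_coe, minSwt_prod_diff_prod (zero_mem _) (zero_mem _),
      euclDual_eq_orthogonal]

/-- Euclidean construction of subsystem codes.
If `C` is a `k'`-dimensional `F_q`-linear code of length `n` whose subcode
`D = C ∩ C^⊥` has dimension `k''`, where `k' + k'' < n`, then there exists an
`F_q`-linear `[[n, n−(k'+k''), k'−k'', d]]_q` Clifford subsystem code, where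
`d = wt(D^⊥ \ C)`. -/
theorem euclidean_construction_of_subsystem_codes
    (p : ℕ) (hp : p.Prime) (F : Type) [Field F] [Fintype F] [CharP F p]
    (n k' k'' : ℕ) (C D : Submodule F (Fin n → F))
    (hD : (D : Set (Fin n → F)) = ↑C ∩ euclDual ↑C)
    (hk' : Module.finrank F C = k') (hk'' : Module.finrank F D = k'')
    (hlt : k' + k'' < n) :
    ∃ Q : AddSubgroup ((Fin n → F) × (Fin n → F)),
      IsSubsysCode p Q (Fintype.card F ^ (n - (k' + k'')))
        (Fintype.card F ^ (k' - k''))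
        (minHwt (euclDual (↑D : Set (Fin n → F)) \ ↑C)) ∧
      FqLinear Q :=
  euclidean_construction_of_subsystem_codes_general p F n k' k'' C D hD hk' hk'' hlt
end

section
/- Hermitian construction of subsystem codes: Let q be a prime power and let C be a k'-dimensional F_{q^2}-linear code of length n whose subcode D = C ∩ C^⊥h has dimension k'', where k' + k'' < n. Then there exists an F_q-linear [[n, n−(k'+k''), k'−k'', d]]_q Clifford subsystem code, where d = wt(D^⊥h \ C) is the minimum Hamming weight of a vector lying in D^⊥h but not in C. -/
open Finset

/-!
Embed `F_q` in `F_{q²}`, fix an `F_q`-basis `b₀, b₁` of `F_{q²}` and write `σ x = x ^ q`. For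
`u = u₀b₀ + u₁b₁` and `v = v₀b₀ + v₁b₁` one has `u σv − σu v = (u₀v₁ − u₁v₀) Δ`, where
`Δ = b₀ σb₁ − σb₀ b₁` is the Moore determinant of the basis, nonzero because `σ ≠ id`. Hence the
coordinate expansion `φ : F_{q²}ⁿ → F_qⁿ × F_qⁿ` turns the symplectic form into
`tr (θ (∑ xᵢ zᵢ^q))` for a surjective `F_q`-linear functional `θ`; as the codes are
`F_{q²}`-linear and `tr ∘ θ` is nonzero, `φ` carries Hermitian duals to trace-symplectic duals, and
it turns Hamming weight into symplectic weight. For `Q = φ C` this gives `Q ∩ Q^⊥s = φ D` and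
`(Q ∩ Q^⊥s)^⊥s = φ D^⊥h ≠ Q`, since `dim D^⊥h = n − k'' > k'`; the parameters follow by counting.
-/

open Module

noncomputable section

variable {F E : Type} [Field F] [Field E] [Algebra F E]

-- `θ w = (σ w - w) / mooreDet b`, by `mul_frobenius_sub_frobenius_mul` with `u = 1`.
def skewFunctional (b : Basis (Fin 2) F E) : E →ₗ[F] F :=
  b.det.toMultilinearMap.toLinearMap ![1, 1] 1

theorem skewFunctional_apply (b : Basis (Fin 2) F E) (w : E) :
    skewFunctional b w = b.det ![1, w] := by
  simp only [skewFunctional, MultilinearMap.toLinearMap_apply, AlternatingMap.coe_multilinearMap]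
  congr 1
  ext i
  fin_cases i <;> simp

def symplecticExpansion (b : Basis (Fin 2) F E) (n : ℕ) :
    (Fin n → E) ≃ₗ[F] (Fin n → F) × (Fin n → F) where
  toFun x := (fun i => b.repr (x i) 0, fun i => b.repr (x i) 1)
  map_add' x y := by ext <;> simp
  map_smul' c x := by ext <;> simp
  invFun v i := v.1 i • b 0 + v.2 i • b 1
  left_inv x := funext fun i => (Fin.sum_univ_two _).symm.trans (b.sum_repr (x i))
  right_inv v := by ext i <;> simp

def symplecticImage (b : Basis (Fin 2) F E) {n : ℕ} (C : Submodule E (Fin n → E)) :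
    AddSubgroup ((Fin n → F) × (Fin n → F)) :=
  ((C.restrictScalars F).map (symplecticExpansion b n).toLinearMap).toAddSubgroup

section Expansion

variable (b : Basis (Fin 2) F E) {n : ℕ}

local notation "Φ" => symplecticExpansion b n

theorem symplecticExpansion_apply (x : Fin n → E) :
    Φ x = (fun i => b.repr (x i) 0, fun i => b.repr (x i) 1) := rfl

theorem swt_symplecticExpansion (x : Fin n → E) : swt (Φ x) = hwt x := by
  have hrepr (y : E) : (b.repr y 0 = 0 ∧ b.repr y 1 = 0) ↔ y = 0 := by
    rw [← b.repr.map_eq_zero_iff, Finsupp.ext_iff, Fin.forall_fin_two]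
    rfl
  simp only [swt, hwt, symplecticExpansion_apply, hrepr]

theorem minSwt_image_diff_symplecticExpansion (A B : Set (Fin n → E)) :
    minSwt (Φ '' A \ Φ '' B) = minHwt (A \ B) := by
  have hinj := (symplecticExpansion b n).injective
  rw [minSwt, minHwt, ← Set.image_sdiff hinj, ← map_zero (symplecticExpansion b n),
    ← Set.image_singleton, ← Set.image_sdiff hinj, Set.image_image]
  simp only [swt_symplecticExpansion]

theorem coe_symplecticImage (C : Submodule E (Fin n → E)) :
    (symplecticImage b C : Set ((Fin n → F) × (Fin n → F))) = Φ '' C := rfl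

theorem fqLinear_symplecticImage (C : Submodule E (Fin n → E)) : FqLinear (symplecticImage b C) :=
  fun a _ hv => Submodule.smul_mem _ a hv

end Expansion

variable [Fintype F]

local notation "σ" => FiniteField.frobeniusAlgHom F E

def mooreDet (b : Basis (Fin 2) F E) : E := b 0 * σ (b 1) - σ (b 0) * b 1

theorem mul_frobenius_sub_frobenius_mul (b : Basis (Fin 2) F E) (u v : E) :
    u * σ v - σ u * v = algebraMap F E (b.det ![u, v]) * mooreDet b := by
  have hu := b.sum_repr u
  have hv := b.sum_repr v
  simp only [Fin.sum_univ_two, Algebra.smul_def] at hu hv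
  conv_lhs => rw [← hu, ← hv]
  simp only [mooreDet, Basis.det_apply, Matrix.det_fin_two, Basis.toMatrix_apply, map_add,
    map_mul, AlgHom.commutes, map_sub, Matrix.cons_val_zero, Matrix.cons_val_one]
  ring

variable [Finite E]

theorem frobeniusAlgHom_apply_apply (h : finrank F E = 2) (x : E) : σ (σ x) = x := by
  have := pow_orderOf_eq_one (FiniteField.frobeniusAlgHom F E)
  rw [FiniteField.orderOf_frobeniusAlgHom, h, pow_two] at this
  exact DFunLike.congr_fun this x

theorem exists_frobeniusAlgHom_ne (h : finrank F E = 2) : ∃ x : E, σ x ≠ x := by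
  by_contra! hx
  have := FiniteField.orderOf_frobeniusAlgHom F E
  rw [show FiniteField.frobeniusAlgHom F E = 1 from AlgHom.ext hx, orderOf_one, h] at this
  omega

theorem mem_hermDual_iff {n : ℕ} (h : finrank F E = 2) (S : Set (Fin n → E)) (x : Fin n → E) :
    x ∈ hermDual (Fintype.card F) S ↔ ∀ z ∈ S, ∑ i, x i * σ (z i) = 0 := by
  refine forall₂_congr fun z _ => ?_
  conv_rhs => rw [← map_eq_zero (FiniteField.frobeniusAlgHom F E), map_sum]
  simp only [map_mul, frobeniusAlgHom_apply_apply h]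
  rfl

variable (b : Basis (Fin 2) F E)

theorem mooreDet_ne_zero : mooreDet b ≠ 0 := by
  intro h
  obtain ⟨x, hx⟩ := exists_frobeniusAlgHom_ne (finrank_eq_card_basis b)
  have := mul_frobenius_sub_frobenius_mul b x 1
  rw [h, mul_zero, map_one, mul_one, mul_one, sub_eq_zero] at this
  exact hx this.symm

theorem det_eq_skewFunctional (u v : E) : b.det ![v, u] = skewFunctional b (u * σ v) := by
  apply (algebraMap F E).injective
  apply mul_right_cancel₀ (mooreDet_ne_zero b)
  rw [skewFunctional_apply, ← mul_frobenius_sub_frobenius_mul, ← mul_frobenius_sub_frobenius_mul,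
    map_mul, frobeniusAlgHom_apply_apply (finrank_eq_card_basis b), map_one]
  ring

theorem skewFunctional_surjective : Function.Surjective (skewFunctional b) := by
  intro a
  refine ⟨(a • b 1) * σ (b 0), ?_⟩
  rw [← det_eq_skewFunctional, Basis.det_apply, Matrix.det_fin_two]
  simp [Basis.toMatrix_apply]

theorem eq_zero_of_forall_skewFunctional_mul {K M : Type*} [CommRing K] [AddCommGroup M]
    [Module K M] [Module K F] (f : F →ₗ[K] M) (hf : f ≠ 0) {s : E}
    (h : ∀ γ : E, f (skewFunctional b (γ * s)) = 0) : s = 0 := by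
  by_contra hs
  refine hf (LinearMap.ext fun a => ?_)
  obtain ⟨w, rfl⟩ := skewFunctional_surjective b a
  simpa [hs] using h (w * s⁻¹)

variable {n : ℕ}

local notation "Φ" => symplecticExpansion b n

theorem sum_symplecticExpansion_mul_sub (x z : Fin n → E) :
    ∑ i, ((Φ z).1 i * (Φ x).2 i - (Φ x).1 i * (Φ z).2 i) =
      skewFunctional b (∑ i, x i * σ (z i)) := by
  rw [map_sum]
  refine Finset.sum_congr rfl fun i _ => ?_
  rw [← det_eq_skewFunctional, Basis.det_apply, Matrix.det_fin_two]
  simp only [symplecticExpansion_apply, Basis.toMatrix_apply, Matrix.cons_val_zero,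
    Matrix.cons_val_one]

theorem sympDual_image_symplecticExpansion (p : ℕ) [Fact p.Prime] [CharP F p]
    (S : Submodule E (Fin n → E)) :
    sympDual p (Φ '' S) = Φ '' hermDual (Fintype.card F) S := by
  let := ZMod.algebra F p
  ext v
  obtain ⟨x, rfl⟩ := (symplecticExpansion b n).surjective v
  rw [(symplecticExpansion b n).injective.mem_set_image,
    mem_hermDual_iff (finrank_eq_card_basis b)]
  simp only [sympDual, Set.mem_ofPred_eq, Set.forall_mem_image, trSympForm,
    sum_symplecticExpansion_mul_sub, SetLike.mem_coe]
  refine ⟨fun h z hz => ?_, fun h z hz => by rw [h z hz, map_zero, map_zero]⟩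
  refine eq_zero_of_forall_skewFunctional_mul b _ (Algebra.trace_ne_zero (ZMod p) F) fun γ => ?_
  obtain ⟨c, rfl⟩ : ∃ c, σ c = γ := ⟨σ γ, frobeniusAlgHom_apply_apply (finrank_eq_card_basis b) γ⟩
  convert h (S.smul_mem c hz) using 3
  simp only [Finset.mul_sum, Pi.smul_apply, smul_eq_mul, map_mul]
  exact Finset.sum_congr rfl fun i _ => by ring

theorem natCard_image_symplecticExpansion (S : Submodule E (Fin n → E)) :
    Nat.card (Φ '' S) = Fintype.card F ^ (2 * finrank E S) := by
  rw [Nat.card_image_of_injective (symplecticExpansion b n).injective, SetLike.coe_sort_coe,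
    Module.natCard_eq_pow_finrank (K := E), Module.natCard_eq_pow_finrank (K := F),
    finrank_eq_card_basis b, Fintype.card_fin, Nat.card_eq_fintype_card, ← pow_mul]

end

theorem ncard_hermDual {E : Type} [Field E] [Finite E] {n : ℕ} (q : ℕ)
    (hq : ∀ x : E, (x ^ q) ^ q = x) (S : Submodule E (Fin n → E)) :
    (hermDual q (S : Set (Fin n → E))).ncard = Nat.card E ^ (n - finrank E S) := by
  set B := Matrix.toBilin' (1 : Matrix (Fin n) (Fin n) E)
  have hB : B.Nondegenerate := LinearMap.BilinForm.nondegenerate_toBilin'_of_det_ne_zero' 1 (by simp)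
  have hfrob : Function.Involutive fun (x : Fin n → E) i => x i ^ q := fun x => funext fun i => hq _
  have hdual : hermDual q (S : Set (Fin n → E)) = (fun x i => x i ^ q) ⁻¹' B.orthogonal S := by
    ext x
    simp [hermDual, B, Matrix.toBilin'_apply', dotProduct, mul_comm]
  rw [hdual, Set.ncard_preimage_of_injective_subset_range hfrob.injective
    (hfrob.surjective.range_eq ▸ Set.subset_univ _), ← Nat.card_coe_set_eq, SetLike.coe_sort_coe,
    Module.natCard_eq_pow_finrank (K := E), LinearMap.BilinForm.finrank_orthogonal hB,
    finrank_fin_fun]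

theorem hermDual_ne_of_finrank_add_lt {E : Type} [Field E] [Finite E] {n : ℕ} (q : ℕ)
    (hq : ∀ x : E, (x ^ q) ^ q = x) (S T : Submodule E (Fin n → E))
    (h : finrank E S + finrank E T < n) : hermDual q (S : Set (Fin n → E)) ≠ T := by
  intro hST
  have hcard := ncard_hermDual q hq S
  rw [hST, ← Nat.card_coe_set_eq, SetLike.coe_sort_coe,
    Module.natCard_eq_pow_finrank (K := E)] at hcard
  have := Nat.pow_right_injective (Finite.one_lt_card (α := E)) hcard
  omega

theorem isSubsysCode_symplecticImage {F E : Type} [Field F] [Fintype F] [Field E] [Algebra F E]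
    [Finite E] (b : Basis (Fin 2) F E) (p : ℕ) [Fact p.Prime] [CharP F p] {n : ℕ}
    (C D : Submodule E (Fin n → E))
    (hD : (D : Set (Fin n → E)) = ↑C ∩ hermDual (Fintype.card F) ↑C)
    (hlt : finrank E C + finrank E D < n) :
    IsSubsysCode p (symplecticImage b C) (Fintype.card F ^ (n - (finrank E C + finrank E D)))
      (Fintype.card F ^ (finrank E C - finrank E D))
      (minHwt (hermDual (Fintype.card F) (D : Set (Fin n → E)) \ ↑C)) := by
  set Φ := symplecticExpansion b n
  have hDC : finrank E D ≤ finrank E C := Submodule.finrank_mono fun x hx => (hD.le hx).1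
  have hDs : (Φ '' C) ∩ sympDual p (Φ '' C) = Φ '' D := by
    rw [sympDual_image_symplecticExpansion, ← Set.image_inter Φ.injective, hD]
  have hne : Φ '' hermDual (Fintype.card F) D ≠ Φ '' C := fun h =>
    hermDual_ne_of_finrank_add_lt _ (frobeniusAlgHom_apply_apply (finrank_eq_card_basis b)) D C
      (by omega) (Φ.injective.image_injective h)
  simp only [IsSubsysCode, coe_symplecticImage]
  rw [hDs, sympDual_image_symplecticExpansion]
  refine ⟨?_, ?_, fun h => absurd h hne, fun _ => ?_⟩
  · rw [natCard_image_symplecticExpansion, ← pow_add, ← pow_add]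
    congr 1
    omega
  · rw [← SetLike.coe_sort_coe, coe_symplecticImage, natCard_image_symplecticExpansion, ← pow_add,
      ← pow_add]
    congr 1
    omega
  · rw [minSwt_image_diff_symplecticExpansion]

theorem exists_algebra_finrank_eq_two (p : ℕ) [Fact p.Prime] (F E : Type) [Field F] [Fintype F]
    [CharP F p] [Field E] [Fintype E] [CharP E p] (hE : Fintype.card E = Fintype.card F ^ 2) :
    ∃ _ : Algebra F E, finrank F E = 2 := by
  let := ZMod.algebra F p
  let := ZMod.algebra E p
  have hdvd : finrank (ZMod p) F ∣ finrank (ZMod p) E := by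
    refine ⟨2, Nat.pow_right_injective (Fact.out : p.Prime).two_le ?_⟩
    dsimp only
    rw [pow_mul, FiniteField.pow_finrank_eq_card, FiniteField.pow_finrank_eq_card, hE]
  obtain ⟨ι⟩ := FiniteField.nonempty_algHom_of_finrank_dvd hdvd
  let _ : Algebra F E := ι.toRingHom.toAlgebra
  refine ⟨‹_›, Nat.pow_right_injective (Fintype.one_lt_card (α := F)) ?_⟩
  simp only [← Module.card_eq_pow_finrank, hE]

/-- Hermitian construction of subsystem codes.
If `C` is a `k'`-dimensional `F_{q^2}`-linear code of length `n` whose subcode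
`D = C ∩ C^⊥h` has dimension `k''`, where `k' + k'' < n`, then there exists an
`F_q`-linear `[[n, n−(k'+k''), k'−k'', d]]_q` Clifford subsystem code, where
`d = wt(D^⊥h \ C)`. -/
theorem hermitian_construction_of_subsystem_codes
    (p : ℕ) (hp : p.Prime) (F : Type) [Field F] [Fintype F] [CharP F p]
    (E : Type) [Field E] [Fintype E] [CharP E p]
    (hE : Fintype.card E = Fintype.card F ^ 2)
    (n k' k'' : ℕ) (C D : Submodule E (Fin n → E))
    (hD : (D : Set (Fin n → E)) = ↑C ∩ hermDual (Fintype.card F) ↑C)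
    (hk' : Module.finrank E C = k') (hk'' : Module.finrank E D = k'')
    (hlt : k' + k'' < n) :
    ∃ Q : AddSubgroup ((Fin n → F) × (Fin n → F)),
      IsSubsysCode p Q (Fintype.card F ^ (n - (k' + k'')))
        (Fintype.card F ^ (k' - k''))
        (minHwt (hermDual (Fintype.card F) (↑D : Set (Fin n → E)) \ ↑C)) ∧
      FqLinear Q := by
  have := Fact.mk hp
  obtain ⟨_, h2⟩ := exists_algebra_finrank_eq_two p F E hE
  let b := finBasisOfFinrankEq F E h2
  subst hk' hk''
  exact ⟨symplecticImage b C, isSubsysCode_symplecticImage b p C D hD hlt,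
    fqLinear_symplecticImage b C⟩
end

section
/- Trading subsystem dimension for co-subsystem dimension: Let q be a power of a prime p. If there exists an ((n,K,R,d))_q Clifford subsystem code with K > p that is pure to d', then there exists an ((n, K/p, pR, d_m))_q Clifford subsystem code with d_m ≥ d that is pure to min{d, d'}. Moreover, if a pure ((n,p,R,d))_q Clifford subsystem code exists, then there exists an ((n,1,pR,d))_q Clifford subsystem code. -/
open Finset

/-!
Regard `F_q^{2n}` as an `F_p`-space with the nondegenerate alternating form `ω` whose orthogonal is
the trace-symplectic dual, and let `D = C ∩ C^⊥`. The two size conditions give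
`|C^⊥| = K² |D|` and `|D^⊥| = K² |C|`, so for `K > 1` the space `C^⊥` is not contained in `C`.
Pick `x ∈ C^⊥ \ C`; as `C = C^⊥⊥` there is `y ∈ C^⊥` with `ω(y, x) ≠ 0`, and
`C' = C + ⟨x, y⟩` has `|C'| = p² |C|`, `C ⊆ C' ⊆ D^⊥` and still `C' ∩ C'^⊥ = D`. Since `K`
divides `q^n` it is a power of `p`, so `C'` is an `((n, K/p, pR, d_m))_q` code, and `D^⊥ \ C' ⊆ D^⊥ \ C` gives `d_m ≥ d`. Every nonzero element of
`C'` lies in `C` or in `D^⊥ \ C`, whence purity to `min{d, d'}`. When `K = p` the sizes force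
`C' = D^⊥`, and purity of `C` makes `swt(D^⊥) = swt(D^⊥ \ C) = d`.
-/

namespace LinearMap.BilinForm

open Module Submodule

variable {k M : Type*} [Field k] [AddCommGroup M] [Module k M] {B : LinearMap.BilinForm k M}

lemma le_orthogonal_comm (hB : B.IsRefl) {N L : Submodule k M} :
    N ≤ B.orthogonal L ↔ L ≤ B.orthogonal N :=
  ⟨fun h _ hl _ hn => hB _ _ (h hn _ hl), fun h _ hn _ hl => hB _ _ (h hl _ hn)⟩

lemma natCard_mul_natCard_orthogonal [Finite k] [FiniteDimensional k M] (hB : B.Nondegenerate)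
    (W : Submodule k M) : Nat.card W * Nat.card (B.orthogonal W) = Nat.card M := by
  rw [natCard_eq_pow_finrank (K := k) (V := W), natCard_eq_pow_finrank (K := k) (V := M),
    natCard_eq_pow_finrank (K := k) (V := B.orthogonal W), ← pow_add, finrank_orthogonal hB,
    Nat.add_sub_cancel' W.finrank_le]

/-- Adjoin to `W` a hyperbolic pair `x, y` taken from `W^⊥`. -/
lemma exists_le_orthogonal_inf_orthogonal_eq [FiniteDimensional k M] (hB : B.Nondegenerate)
    (hAlt : B.IsAlt) {W : Submodule k M} (hW : ¬ B.orthogonal W ≤ W) :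
    ∃ W' : Submodule k M, W ≤ W' ∧ W' ≤ B.orthogonal (W ⊓ B.orthogonal W) ∧
      W' ⊓ B.orthogonal W' = W ⊓ B.orthogonal W ∧ finrank k W' = finrank k W + 2 := by
  have hRefl : B.IsRefl := LinearMap.IsAlt.isRefl hAlt
  obtain ⟨x, hxW, hx⟩ := SetLike.not_le_iff_exists.mp hW
  obtain ⟨y, hyW, hyx⟩ : ∃ y ∈ B.orthogonal W, B y x ≠ 0 := by
    rw [← orthogonal_orthogonal hB hRefl W, mem_orthogonal_iff] at hx
    push Not at hx
    exact hx
  have hxy : B x y ≠ 0 := fun h => hyx (hRefl _ _ h)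
  have hy : y ∉ W ⊔ span k {x} := by
    intro hy
    obtain ⟨w, hw, _, hc, rfl⟩ := mem_sup.mp hy
    obtain ⟨c, rfl⟩ := mem_span_singleton.mp hc
    simp [hxW w hw, hAlt.self_eq_zero] at hyx
  have hWD : W ≤ B.orthogonal (W ⊓ B.orthogonal W) := (le_orthogonal_comm hRefl).mp inf_le_right
  have hperp : B.orthogonal W ≤ B.orthogonal (W ⊓ B.orthogonal W) := orthogonal_le inf_le_left
  have hW'D : W ⊔ span k {x} ⊔ span k {y} ≤ B.orthogonal (W ⊓ B.orthogonal W) :=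
    sup_le (sup_le hWD ((span_singleton_le_iff_mem _ _).mpr (hperp hxW)))
      ((span_singleton_le_iff_mem _ _).mpr (hperp hyW))
  refine ⟨W ⊔ span k {x} ⊔ span k {y}, le_sup_left.trans le_sup_left, hW'D, le_antisymm ?_
    (le_inf (inf_le_left.trans (le_sup_left.trans le_sup_left))
      ((le_orthogonal_comm hRefl).mp hW'D)),
    by rw [finrank_sup_span_singleton hy, finrank_sup_span_singleton hx]⟩
  rintro z ⟨hz, hzperp⟩
  obtain ⟨v, hv, _, hb, rfl⟩ := mem_sup.mp hz
  obtain ⟨w, hw, _, ha, rfl⟩ := mem_sup.mp hv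
  obtain ⟨a, rfl⟩ := mem_span_singleton.mp ha
  obtain ⟨b, rfl⟩ := mem_span_singleton.mp hb
  have hbx := hzperp x (mem_sup_left (mem_sup_right (mem_span_singleton_self x)))
  have hay := hzperp y (mem_sup_right (mem_span_singleton_self y))
  obtain rfl : b = 0 := by simpa [hRefl _ _ (hxW w hw), hAlt.self_eq_zero, hxy] using hbx
  obtain rfl : a = 0 := by simpa [hRefl _ _ (hyW w hw), hAlt.self_eq_zero, hyx] using hay
  simp only [zero_smul, add_zero] at hzperp ⊢
  exact ⟨hw, orthogonal_le (le_sup_left.trans le_sup_left) hzperp⟩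

end LinearMap.BilinForm

lemma Submodule.nonempty_diff_diff_zero_of_lt {R M : Type*} [Semiring R] [AddCommMonoid M]
    [Module R M] {A B : Submodule R M} (h : A < B) : (((B : Set M) \ A) \ {0}).Nonempty := by
  obtain ⟨v, hvB, hvA⟩ := SetLike.exists_of_lt h
  exact ⟨v, ⟨hvB, hvA⟩, fun h0 => hvA (Set.mem_singleton_iff.mp h0 ▸ A.zero_mem)⟩

section MinSwt

variable {F : Type} [Field F] {n : ℕ} {S T : Set ((Fin n → F) × (Fin n → F))}
  {v : (Fin n → F) × (Fin n → F)}

lemma minSwt_le_swt (hv : v ∈ S) (h0 : v ≠ 0) : minSwt S ≤ swt v :=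
  Nat.sInf_le ⟨v, ⟨hv, h0⟩, rfl⟩

lemma le_minSwt {d : ℕ} (hS : (S \ {0}).Nonempty) (h : ∀ v ∈ S, v ≠ 0 → d ≤ swt v) :
    d ≤ minSwt S :=
  le_csInf (hS.image swt) (by rintro _ ⟨v, ⟨hv, h0⟩, rfl⟩; exact h v hv h0)

lemma minSwt_anti (hST : S ⊆ T) (hS : (S \ {0}).Nonempty) : minSwt T ≤ minSwt S :=
  le_minSwt hS fun _ hv h0 => minSwt_le_swt (hST hv) h0

lemma min_le_swt_of_pureTo {C : AddSubgroup ((Fin n → F) × (Fin n → F))} {d d' : ℕ}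
    (hd : d = minSwt (S \ C)) (hpure : PureTo C d') (hv : v ∈ S) (h0 : v ≠ 0) :
    min d d' ≤ swt v := by
  by_cases hvC : v ∈ C
  · exact (min_le_right d d').trans (hpure v hvC h0)
  · exact (min_le_left d d').trans (hd ▸ minSwt_le_swt ⟨hv, hvC⟩ h0)

end MinSwt

lemma IsSubsysCode.dvd_of_ne_one {p : ℕ} (hp : p.Prime) {F : Type} [Field F] [Fintype F]
    [CharP F p] {n K R d : ℕ} {C : AddSubgroup ((Fin n → F) × (Fin n → F))}
    (hC : IsSubsysCode p C K R d) (hK : K ≠ 1) : p ∣ K := by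
  obtain ⟨e, -, hq⟩ := FiniteField.card F p
  have hdvd : K ∣ p ^ (e * n : ℕ) := by
    rw [pow_mul, ← hq, ← hC.1]
    exact dvd_mul_of_dvd_right (dvd_mul_right K R) _
  obtain ⟨a, -, rfl⟩ := (Nat.dvd_prime_pow hp).mp hdvd
  exact dvd_pow_self p (by rintro rfl; exact hK (pow_zero p))

section TraceSymplectic

attribute [local instance] ZMod.algebra

variable (p : ℕ) [Fact p.Prime] {F : Type} [Field F] [Fintype F] [CharP F p] {n : ℕ}

local notation "𝕍" => (Fin n → F) × (Fin n → F)

noncomputable def trSympBilin : LinearMap.BilinForm (ZMod p) 𝕍 :=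
  LinearMap.mk₂ (ZMod p) (trSympForm p)
    (fun u u' v => by
      simp only [trSympForm, ← map_add, ← Finset.sum_add_distrib, Prod.fst_add, Prod.snd_add,
        Pi.add_apply]
      congr 2; ext; ring)
    (fun c u v => by
      simp only [trSympForm, ← map_smul, Finset.smul_sum]
      congr 2; ext
      simp only [Prod.smul_fst, Prod.smul_snd, Pi.smul_apply, Algebra.smul_def (A := F)]
      ring)
    (fun u v v' => by
      simp only [trSympForm, ← map_add, ← Finset.sum_add_distrib, Prod.fst_add, Prod.snd_add,
        Pi.add_apply]
      congr 2; ext; ring)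
    (fun c u v => by
      simp only [trSympForm, ← map_smul, Finset.smul_sum]
      congr 2; ext
      simp only [Prod.smul_fst, Prod.smul_snd, Pi.smul_apply, Algebra.smul_def (A := F)]
      ring)

lemma trSympBilin_isAlt : (trSympBilin p (F := F) (n := n)).IsAlt := fun u => by
  simp [trSympBilin, trSympForm]

/-- Testing against `(0, e_j c)` and `(e_j c, 0)` reduces this to nondegeneracy of the trace form
of the separable extension `F / 𝔽_p`. -/
lemma trSympBilin_nondegenerate : (trSympBilin p (F := F) (n := n)).Nondegenerate := by
  refine (LinearMap.IsAlt.isRefl (trSympBilin_isAlt p)).nondegenerate_iff_separatingLeft.mpr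
    fun u hu => ?_
  have htr : ∀ x : F, (∀ c : F, Algebra.trace (ZMod p) F (x * c) = 0) → x = 0 := fun x hx =>
    (traceForm_nondegenerate (ZMod p) F).1 x (by simpa [Algebra.traceForm_apply] using hx)
  ext j
  · refine htr _ fun c => ?_
    simpa [trSympBilin, trSympForm, Pi.single_apply] using hu (0, Pi.single j c)
  · refine htr _ fun c => ?_
    simpa [trSympBilin, trSympForm, Pi.single_apply, mul_comm] using hu (Pi.single j c, 0)

variable {p}

local notation:max W "^⊥ₛ" => LinearMap.BilinForm.orthogonal (trSympBilin p) W

lemma sympDual_eq_orthogonal (W : Submodule (ZMod p) 𝕍) :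
    sympDual p (W : Set 𝕍) = W^⊥ₛ := by
  ext v
  exact forall₂_congr fun w _ => (LinearMap.IsAlt.eq_iff (trSympBilin_isAlt p))

lemma isSubsysCode_toAddSubgroup_iff {C : Submodule (ZMod p) 𝕍} {K R d : ℕ} :
    IsSubsysCode p C.toAddSubgroup K R d ↔
      Nat.card ↥(C ⊓ C^⊥ₛ) * (K * R) = Fintype.card F ^ n ∧
      Nat.card C * K = Fintype.card F ^ n * R ∧
      ((C ⊓ C^⊥ₛ)^⊥ₛ = C → d = minSwt ((C ⊓ C^⊥ₛ)^⊥ₛ : Set 𝕍)) ∧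
      ((C ⊓ C^⊥ₛ)^⊥ₛ ≠ C → d = minSwt (((C ⊓ C^⊥ₛ)^⊥ₛ : Set 𝕍) \ C)) := by
  simp only [IsSubsysCode, Submodule.coe_toAddSubgroup, sympDual_eq_orthogonal,
    ← Submodule.coe_inf, ne_eq, SetLike.coe_set_eq]
  rfl

lemma natCard_orthogonal_of_isSubsysCode {C : Submodule (ZMod p) 𝕍} {K R d : ℕ}
    (hC : IsSubsysCode p C.toAddSubgroup K R d) :
    Nat.card ↥C^⊥ₛ = K ^ 2 * Nat.card ↥(C ⊓ C^⊥ₛ) ∧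
      Nat.card ↥(C ⊓ C^⊥ₛ)^⊥ₛ = K ^ 2 * Nat.card C := by
  obtain ⟨h1, h2, -⟩ := isSubsysCode_toAddSubgroup_iff.mp hC
  have hR : 0 < R := Nat.pos_of_ne_zero <| by
    rintro rfl
    rw [mul_zero, mul_zero] at h1
    exact (pow_pos Fintype.card_pos n).ne h1
  have key : Nat.card 𝕍 * R = Nat.card C * Nat.card ↥(C ⊓ C^⊥ₛ) * K ^ 2 * R := by
    rw [Nat.card_prod, Nat.card_fun, Nat.card_fin, Nat.card_eq_fintype_card, mul_assoc, ← h2,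
      ← h1]
    ring
  have hnd := trSympBilin_nondegenerate p (F := F) (n := n)
  constructor
  · refine Nat.eq_of_mul_eq_mul_left (Nat.mul_pos Nat.card_pos hR : 0 < Nat.card C * R) ?_
    calc Nat.card C * R * Nat.card ↥C^⊥ₛ = Nat.card C * Nat.card ↥C^⊥ₛ * R := by ring
      _ = _ := by rw [LinearMap.BilinForm.natCard_mul_natCard_orthogonal hnd, key]; ring
  · refine Nat.eq_of_mul_eq_mul_left
      (Nat.mul_pos Nat.card_pos hR : 0 < Nat.card ↥(C ⊓ C^⊥ₛ) * R) ?_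
    calc Nat.card ↥(C ⊓ C^⊥ₛ) * R * Nat.card ↥(C ⊓ C^⊥ₛ)^⊥ₛ
        = Nat.card ↥(C ⊓ C^⊥ₛ) * Nat.card ↥(C ⊓ C^⊥ₛ)^⊥ₛ * R := by ring
      _ = _ := by rw [LinearMap.BilinForm.natCard_mul_natCard_orthogonal hnd, key]; ring

lemma exists_extension_of_isSubsysCode {C : Submodule (ZMod p) 𝕍} {K R d : ℕ}
    (hC : IsSubsysCode p C.toAddSubgroup K R d) (hpK : p ∣ K) :
    ∃ C' : Submodule (ZMod p) 𝕍, C < C' ∧ C' ≤ (C ⊓ C^⊥ₛ)^⊥ₛ ∧ C' ⊓ C'^⊥ₛ = C ⊓ C^⊥ₛ ∧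
      Nat.card C' * (K / p) = Fintype.card F ^ n * (p * R) ∧
      Nat.card ↥(C ⊓ C^⊥ₛ)^⊥ₛ = (K / p) ^ 2 * Nat.card C' := by
  have hp : p.Prime := Fact.out
  obtain ⟨hperp, hperpD⟩ := natCard_orthogonal_of_isSubsysCode hC
  obtain ⟨-, h2, -⟩ := isSubsysCode_toAddSubgroup_iff.mp hC
  obtain ⟨m, rfl⟩ := hpK
  have hnot : ¬ C^⊥ₛ ≤ C := by
    intro hle
    rw [inf_eq_right.mpr hle] at hperp
    have := (mul_eq_right₀ Nat.card_pos.ne').mp hperp.symm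
    simp [hp.ne_one] at this
  obtain ⟨C', hle, hC'D, hrad, hrank⟩ :=
    LinearMap.BilinForm.exists_le_orthogonal_inf_orthogonal_eq (trSympBilin_nondegenerate p)
      (trSympBilin_isAlt p) hnot
  have hcard : Nat.card C' = p ^ 2 * Nat.card C := by
    rw [Module.natCard_eq_pow_finrank (K := ZMod p) (V := C'),
      Module.natCard_eq_pow_finrank (K := ZMod p) (V := C), hrank, Nat.card_zmod, pow_add,
      mul_comm]
  refine ⟨C', Submodule.lt_of_le_of_finrank_lt_finrank hle (by omega), hC'D, hrad, ?_, ?_⟩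
  · rw [Nat.mul_div_cancel_left m hp.pos, hcard]
    calc p ^ 2 * Nat.card C * m = p * (Nat.card C * (p * m)) := by ring
      _ = _ := by rw [h2]; ring
  · rw [Nat.mul_div_cancel_left m hp.pos, hperpD, hcard]
    ring

theorem exists_isSubsysCode_div_of_lt {C : AddSubgroup 𝕍} {K R d d' : ℕ} (hK : p < K)
    (hC : IsSubsysCode p C K R d) (hpure : PureTo C d') :
    ∃ dm, d ≤ dm ∧ ∃ C' : AddSubgroup 𝕍,
      IsSubsysCode p C' (K / p) (p * R) dm ∧ PureTo C' (min d d') := by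
  have hp : p.Prime := Fact.out
  have hpK := hC.dvd_of_ne_one hp (by have := hp.one_lt; omega)
  obtain ⟨C, rfl⟩ : ∃ W : Submodule (ZMod p) 𝕍, W.toAddSubgroup = C :=
    ⟨_, AddSubgroup.toZModSubmodule_toAddSubgroup p C⟩
  obtain ⟨C', hCC', hC'D, hrad, hcard, hcardD⟩ := exists_extension_of_isSubsysCode hC hpK
  obtain ⟨h1, -, -, hd⟩ := isSubsysCode_toAddSubgroup_iff.mp hC
  have hC'lt : C' < (C ⊓ C^⊥ₛ)^⊥ₛ := by
    refine hC'D.lt_of_ne fun h => ?_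
    rw [← h] at hcardD
    have hKp : K / p ≠ 1 := fun h => by
      have := Nat.div_mul_cancel hpK
      rw [h, one_mul] at this
      omega
    have := (mul_eq_right₀ Nat.card_pos.ne').mp hcardD.symm
    simp [hKp] at this
  have hd' := hd (hCC'.trans hC'lt).ne'
  refine ⟨minSwt (((C ⊓ C^⊥ₛ)^⊥ₛ : Set 𝕍) \ C'), ?_, C'.toAddSubgroup, ?_, ?_⟩
  · rw [hd']
    exact minSwt_anti (Set.sdiff_subset_sdiff_right hCC'.le)
      (Submodule.nonempty_diff_diff_zero_of_lt hC'lt)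
  · rw [isSubsysCode_toAddSubgroup_iff, hrad, ← mul_assoc (K / p), Nat.div_mul_cancel hpK]
    exact ⟨h1, hcard, fun h => absurd h hC'lt.ne', fun _ => rfl⟩
  · exact fun v hv h0 => min_le_swt_of_pureTo hd' hpure (hC'D hv) h0

theorem exists_isSubsysCode_one_of_pure {C : AddSubgroup 𝕍} {R d : ℕ}
    (hC : IsSubsysCode p C p R d) (hpure : PureTo C d) :
    ∃ C' : AddSubgroup 𝕍, IsSubsysCode p C' 1 (p * R) d := by
  obtain ⟨C, rfl⟩ : ∃ W : Submodule (ZMod p) 𝕍, W.toAddSubgroup = C :=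
    ⟨_, AddSubgroup.toZModSubmodule_toAddSubgroup p C⟩
  obtain ⟨C', hCC', hC'D, hrad, hcard, hcardD⟩ := exists_extension_of_isSubsysCode hC dvd_rfl
  rw [Nat.div_self (Fact.out : p.Prime).pos] at hcard hcardD
  have hC'eq : C' = (C ⊓ C^⊥ₛ)^⊥ₛ := Submodule.toAddSubgroup_injective <|
    AddSubgroup.eq_of_le_of_card_ge hC'D (by rw [one_pow, one_mul] at hcardD; exact hcardD.le)
  obtain ⟨h1, -, -, hd⟩ := isSubsysCode_toAddSubgroup_iff.mp hC
  rw [hC'eq] at hCC' hcard hrad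
  have hd' := hd hCC'.ne'
  have hne := Submodule.nonempty_diff_diff_zero_of_lt hCC'
  refine ⟨((C ⊓ C^⊥ₛ)^⊥ₛ).toAddSubgroup, ?_⟩
  rw [isSubsysCode_toAddSubgroup_iff, hrad, one_mul]
  refine ⟨h1, hcard, fun _ => le_antisymm ?_ ?_, fun h => absurd rfl h⟩
  · exact le_minSwt (hne.mono (Set.sdiff_subset_sdiff_left Set.sdiff_subset))
      fun v hv h0 => min_self d ▸ min_le_swt_of_pureTo hd' hpure hv h0
  · exact hd' ▸ minSwt_anti Set.sdiff_subset hne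

end TraceSymplectic

/-- Trading subsystem dimension for co-subsystem dimension.
If there exists an `((n,K,R,d))_q` Clifford subsystem code with `K > p` that is
pure to `d'`, then there exists an `((n, K/p, pR, d_m))_q` Clifford subsystem
code with `d_m ≥ d` that is pure to `min{d, d'}`.  Moreover, if a pure
`((n,p,R,d))_q` Clifford subsystem code exists, then there exists an
`((n,1,pR,d))_q` Clifford subsystem code. -/
theorem trade_subsystem_for_cosubsystem
    (p : ℕ) (hp : p.Prime) (F : Type) [Field F] [Fintype F] [CharP F p]
    (n K R d d' : ℕ) :
    ((p < K ∧ ∃ C : AddSubgroup ((Fin n → F) × (Fin n → F)),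
        IsSubsysCode p C K R d ∧ PureTo C d') →
      ∃ dm : ℕ, d ≤ dm ∧
        ∃ C : AddSubgroup ((Fin n → F) × (Fin n → F)),
          IsSubsysCode p C (K / p) (p * R) dm ∧ PureTo C (min d d')) ∧
    ((∃ C : AddSubgroup ((Fin n → F) × (Fin n → F)),
        IsSubsysCode p C p R d ∧ PureTo C d) →
      ∃ C : AddSubgroup ((Fin n → F) × (Fin n → F)),
        IsSubsysCode p C 1 (p * R) d) := by
  have : Fact p.Prime := ⟨hp⟩
  exact ⟨fun ⟨hK, C, hC, hpure⟩ => exists_isSubsysCode_div_of_lt hK hC hpure,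
    fun ⟨C, hC, hpure⟩ => exists_isSubsysCode_one_of_pure hC hpure⟩
end

section
/- Extension of additive codes commutes with trace-symplectic duality: Let q be a power of a prime p and let X ⊆ F_q^{2n} be an additive (F_p-linear) code. Define X' ⊆ F_q^{2(n+1)} by X' = {(a_1,...,a_n,α | b_1,...,b_n,0) : (a|b) ∈ X, α ∈ F_q}. Then |X'| = q·|X| and (X')^⊥s = (X^⊥s)', where the trace-symplectic duals are taken in F_q^{2n} and F_q^{2(n+1)} respectively. -/
open Finset

/-- Extension of a code in `F_q^{2n}` to `F_q^{2(n+1)}`: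
`X' = {(a_1,…,a_n,α | b_1,…,b_n,0) : (a|b) ∈ X, α ∈ F_q}`. -/
def extendCode {F : Type} [Field F] {n : ℕ} (X : Set ((Fin n → F) × (Fin n → F))) :
    Set ((Fin (n + 1) → F) × (Fin (n + 1) → F)) :=
  {v | ∃ w ∈ X, ∃ α : F, v = (Fin.snoc w.1 α, Fin.snoc w.2 0)}

/-!
Pairing a vector `v` of length `n + 1` with an extended vector `(w.1, α | w.2, 0)`, the
trace-symplectic form splits as the form of the truncation of `v` against `w` plus
`tr(α · v.2 (n+1))`. Taking `α = 0` shows that the truncation of a dual vector lies in `X^⊥s`;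
taking `w = 0` and letting `α` vary shows `v.2 (n+1) = 0`, because the trace form of
`F_q / F_p` is nondegenerate.
-/

theorem Algebra.eq_zero_of_forall_trace_mul_eq_zero {K L : Type*} [Field K] [Field L]
    [Algebra K L] [FiniteDimensional K L] [Algebra.IsSeparable K L] {c : L}
    (h : ∀ a : L, Algebra.trace K L (a * c) = 0) : c = 0 :=
  (traceForm_nondegenerate K L).1 c fun a => by
    rw [Algebra.traceForm_apply, mul_comm]
    exact h a

section Extension

variable {F : Type} [Field F] {n : ℕ}

theorem mem_extendCode_iff {S : Set ((Fin n → F) × (Fin n → F))}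
    {v : (Fin (n + 1) → F) × (Fin (n + 1) → F)} :
    v ∈ extendCode S ↔ (Fin.init v.1, Fin.init v.2) ∈ S ∧ v.2 (Fin.last n) = 0 := by
  constructor
  · rintro ⟨w, hw, α, rfl⟩
    simpa using hw
  · rintro ⟨hv, hlast⟩
    refine ⟨_, hv, v.1 (Fin.last n), ?_⟩
    rw [← hlast, Fin.snoc_init_self, Fin.snoc_init_self]

theorem extendCode_eq_image (S : Set ((Fin n → F) × (Fin n → F))) :
    extendCode S = (fun x : ((Fin n → F) × (Fin n → F)) × F =>
      (Fin.snoc x.1.1 x.2, Fin.snoc x.1.2 0)) '' (S ×ˢ Set.univ) := by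
  ext v
  simp [extendCode, eq_comm]

theorem card_extendCode (S : Set ((Fin n → F) × (Fin n → F))) :
    Nat.card (extendCode S) = Nat.card F * Nat.card S := by
  have hinj : Function.Injective (fun x : ((Fin n → F) × (Fin n → F)) × F =>
      ((Fin.snoc x.1.1 x.2 : Fin (n + 1) → F), (Fin.snoc x.1.2 0 : Fin (n + 1) → F))) := by
    rintro ⟨⟨a, b⟩, α⟩ ⟨⟨a', b'⟩, α'⟩ h
    simp only [Prod.mk.injEq, Fin.snoc_inj, and_true] at h
    obtain ⟨⟨rfl, rfl⟩, rfl⟩ := h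
    rfl
  rw [extendCode_eq_image, Nat.card_image_of_injective hinj,
    Nat.card_congr (Equiv.Set.prod S Set.univ), Nat.card_prod, Nat.card_univ, mul_comm]

attribute [local instance] ZMod.algebra

theorem trSympForm_extend (p : ℕ) [Fintype F] [CharP F p]
    (v : (Fin (n + 1) → F) × (Fin (n + 1) → F)) (w : (Fin n → F) × (Fin n → F)) (α : F) :
    trSympForm p v (Fin.snoc w.1 α, Fin.snoc w.2 0) =
      trSympForm p (Fin.init v.1, Fin.init v.2) w +
        Algebra.trace (ZMod p) F (α * v.2 (Fin.last n)) := by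
  simp only [trSympForm, ← map_add, Fin.sum_univ_castSucc]
  simp [Fin.init]

theorem trSympForm_zero_right (p : ℕ) [Fintype F] [CharP F p] (v : (Fin n → F) × (Fin n → F)) :
    trSympForm p v 0 = 0 := by
  simp [trSympForm]

theorem mem_sympDual_extendCode_iff (p : ℕ) [Fintype F] [CharP F p]
    {S : Set ((Fin n → F) × (Fin n → F))} (hS : 0 ∈ S)
    {v : (Fin (n + 1) → F) × (Fin (n + 1) → F)} :
    v ∈ sympDual p (extendCode S) ↔
      (Fin.init v.1, Fin.init v.2) ∈ sympDual p S ∧ v.2 (Fin.last n) = 0 := by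
  have : Fact p.Prime := ⟨CharP.char_is_prime F p⟩
  simp only [sympDual, extendCode, Set.mem_ofPred_eq, forall_exists_index, and_imp]
  constructor
  · intro hv
    refine ⟨fun w hw => ?_, Algebra.eq_zero_of_forall_trace_mul_eq_zero (K := ZMod p) fun α => ?_⟩
    · simpa [trSympForm_extend] using hv _ w hw 0 rfl
    · simpa only [trSympForm_extend, trSympForm_zero_right, zero_add] using hv _ 0 hS α rfl
  · rintro ⟨hv, hlast⟩ _ w hw α rfl
    simp [trSympForm_extend, hv w hw, hlast]

end Extension

theorem extension_commutes_with_symplectic_duality_general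
    (p : ℕ) (F : Type) [Field F] [Fintype F] [CharP F p]
    (n : ℕ) (X : AddSubgroup ((Fin n → F) × (Fin n → F))) :
    Nat.card (extendCode (X : Set ((Fin n → F) × (Fin n → F)))) =
      Fintype.card F * Nat.card X ∧
    sympDual p (extendCode (X : Set ((Fin n → F) × (Fin n → F)))) =
      extendCode (sympDual p (X : Set ((Fin n → F) × (Fin n → F)))) := by
  refine ⟨by rw [card_extendCode, Nat.card_eq_fintype_card]; rfl, ?_⟩
  ext v
  rw [mem_sympDual_extendCode_iff p X.zero_mem, mem_extendCode_iff]

/-- Extension of additive codes commutes with trace-symplectic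
duality.  For an additive code `X ⊆ F_q^{2n}`, one has `|X'| = q·|X|` and
`(X')^⊥s = (X^⊥s)'`. -/
theorem extension_commutes_with_symplectic_duality
    (p : ℕ) (hp : p.Prime) (F : Type) [Field F] [Fintype F] [CharP F p]
    (n : ℕ) (X : AddSubgroup ((Fin n → F) × (Fin n → F))) :
    Nat.card (extendCode (X : Set ((Fin n → F) × (Fin n → F)))) =
      Fintype.card F * Nat.card X ∧
    sympDual p (extendCode (X : Set ((Fin n → F) × (Fin n → F)))) =
      extendCode (sympDual p (X : Set ((Fin n → F) × (Fin n → F)))) :=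
  extension_commutes_with_symplectic_duality_general p F n X
end

section
/- Shortening subsystem codes: If there exists a pure ((n,K,R,d))_q Clifford subsystem code with n ≥ 2 and d ≥ 2, then there exists a pure ((n−1, qK, R, d−1))_q Clifford subsystem code. -/
open Finset

/-!
Pick a nonzero vector `w` of minimum weight `d` in `D^⊥s`, where `D = C ∩ C^⊥s`, and a coordinate
`i` in its support. By purity every nonzero vector of `D^⊥s ⊇ C + C^⊥s` has weight at least
`d ≥ 2`, so none of these codes meets the subspace `E` of vectors supported on `{i}`. Shorten at
`i`: keep the vectors vanishing at `i`, then delete that coordinate. As `C^⊥s ∩ E = 0`, this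
divides `|C|` by `q²` and turns `C^⊥s` into its puncture at `i`; the same holds for `D`, and
shortening commutes with `C ↦ C ∩ C^⊥s` because deletion is injective on `C + C^⊥s`. Hence the new
`D^⊥s` is the puncture of the old one: its nonzero vectors have weight at least `d - 1`, attained by
the punctured `w`, which lies outside the shortened `C` since shortening preserves purity to `d`.
-/

open Module
open LinearMap (ker)

lemma Nat.mul_mul_eq_of_mul_sq_eq {a b q x y m : ℕ} (hq : 0 < q) (hab : a * q ^ 2 = b)
    (hb : b * x = q ^ (m + 1) * y) : a * (q * x) = q ^ m * y := by
  refine Nat.eq_of_mul_eq_mul_right hq ?_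
  calc a * (q * x) * q = a * q ^ 2 * x := by ring
    _ = q ^ m * y * q := by rw [hab, hb]; ring

section LinearAlgebra

variable {R M N : Type*}

lemma LinearMap.BilinForm.orthogonal_sup [CommSemiring R] [AddCommMonoid M] [Module R M]
    (B : LinearMap.BilinForm R M) (S T : Submodule R M) :
    B.orthogonal (S ⊔ T) = B.orthogonal S ⊓ B.orthogonal T := by
  refine le_antisymm (le_inf (orthogonal_le le_sup_left) (orthogonal_le le_sup_right)) ?_
  rintro v ⟨hS, hT⟩ w hw
  obtain ⟨x, hx, y, hy, rfl⟩ := Submodule.mem_sup.mp hw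
  simp only [LinearMap.map_add, LinearMap.add_apply, hS x hx, hT y hy, add_zero]

variable [Ring R] [AddCommGroup M] [Module R M] [AddCommGroup N] [Module R N]

lemma Submodule.finrank_map_of_disjoint_ker (f : M →ₗ[R] N) {S : Submodule R M}
    (h : Disjoint S (ker f)) : finrank R (S.map f) = finrank R S := by
  rw [← LinearMap.range_domRestrict]
  exact LinearMap.finrank_range_of_inj (LinearMap.injective_domRestrict_iff.mpr h)

lemma Submodule.map_inf_of_disjoint_ker (f : M →ₗ[R] N) {S T : Submodule R M}
    (h : Disjoint (S ⊔ T) (ker f)) : (S ⊓ T).map f = S.map f ⊓ T.map f := by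
  refine le_antisymm (Submodule.map_inf_le f) ?_
  rintro _ ⟨⟨x, hx, rfl⟩, ⟨y, hy, hxy⟩⟩
  have : y = x := LinearMap.disjoint_ker_iff_injOn.mp h (Submodule.mem_sup_right hy)
    (Submodule.mem_sup_left hx) hxy
  exact ⟨x, ⟨hx, this ▸ hy⟩, rfl⟩

end LinearAlgebra

abbrev SympSpace (F : Type) (n : ℕ) := (Fin n → F) × (Fin n → F)

section Form

variable (k : Type*) (F : Type) [CommRing k] [CommRing F] [Algebra k F]

noncomputable def sympForm (n : ℕ) : LinearMap.BilinForm k (SympSpace F n) :=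
  LinearMap.mk₂ k (fun u v => Algebra.trace k F (∑ i, (v.1 i * u.2 i - u.1 i * v.2 i)))
    (fun u u' v => by
      simp only [Prod.fst_add, Prod.snd_add, Pi.add_apply, ← map_add, ← Finset.sum_add_distrib]
      congr 1; exact Finset.sum_congr rfl fun i _ => by ring)
    (fun c u v => by
      simp only [Prod.smul_fst, Prod.smul_snd, Pi.smul_apply, ← map_smul, Finset.smul_sum,
        smul_sub, Algebra.mul_smul_comm, Algebra.smul_mul_assoc])
    (fun u v v' => by
      simp only [Prod.fst_add, Prod.snd_add, Pi.add_apply, ← map_add, ← Finset.sum_add_distrib]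
      congr 1; exact Finset.sum_congr rfl fun i _ => by ring)
    (fun c u v => by
      simp only [Prod.smul_fst, Prod.smul_snd, Pi.smul_apply, ← map_smul, Finset.smul_sum,
        smul_sub, Algebra.mul_smul_comm, Algebra.smul_mul_assoc])

variable {k F} {n : ℕ}

lemma sympForm_apply (u v : SympSpace F n) :
    sympForm k F n u v = Algebra.trace k F (∑ i, (v.1 i * u.2 i - u.1 i * v.2 i)) := rfl

lemma sympForm_swap (u v : SympSpace F n) : sympForm k F n u v = -sympForm k F n v u := by
  simp only [sympForm_apply, ← map_neg, ← Finset.sum_neg_distrib, neg_sub]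

lemma sympForm_isRefl : (sympForm k F n).IsRefl := fun u v h => by
  rw [sympForm_swap, h, neg_zero]

lemma sympForm_apply_single (u : SympSpace F n) (i : Fin n) (a b : F) :
    sympForm k F n u (Pi.single i a, Pi.single i b) =
      Algebra.trace k F (a * u.2 i - u.1 i * b) := by
  rw [sympForm_apply, Finset.sum_eq_single i (fun j _ hj => by simp [hj]) (by simp)]
  simp

end Form

section Coordinates

variable (R : Type*) {F : Type} [Semiring R] [AddCommMonoid F] [Module R F] {m n : ℕ}

def coordProj (i : Fin n) : SympSpace F n →ₗ[R] F × F :=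
  (LinearMap.proj i).prodMap (LinearMap.proj i)

def coordSingle (i : Fin n) : F × F →ₗ[R] SympSpace F n :=
  (LinearMap.single R (fun _ => F) i).prodMap (LinearMap.single R (fun _ => F) i)

def deleteCoord (i : Fin (m + 1)) : SympSpace F (m + 1) →ₗ[R] SympSpace F m :=
  (LinearMap.funLeft R F i.succAbove).prodMap (LinearMap.funLeft R F i.succAbove)

def shorten (i : Fin (m + 1)) (A : Submodule R (SympSpace F (m + 1))) :
    Submodule R (SympSpace F m) :=
  (A ⊓ ker (coordProj R i)).map (deleteCoord R i)

variable {R}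

@[simp]
lemma coordProj_apply (i : Fin n) (v : SympSpace F n) : coordProj R i v = (v.1 i, v.2 i) := rfl

@[simp]
lemma coordSingle_apply (i : Fin n) (z : F × F) :
    coordSingle R i z = (Pi.single i z.1, Pi.single i z.2) := rfl

@[simp]
lemma deleteCoord_apply (i : Fin (m + 1)) (v : SympSpace F (m + 1)) :
    deleteCoord R i v = (v.1 ∘ i.succAbove, v.2 ∘ i.succAbove) := rfl

lemma coordProj_eq_zero_iff (i : Fin n) (v : SympSpace F n) :
    coordProj R i v = 0 ↔ v.1 i = 0 ∧ v.2 i = 0 :=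
  Prod.mk_eq_zero

lemma coordProj_coordSingle (i : Fin n) (z : F × F) : coordProj R i (coordSingle R i z) = z := by
  simp

lemma coordSingle_injective (i : Fin n) : Function.Injective (coordSingle R i : F × F → _) :=
  Function.LeftInverse.injective (coordProj_coordSingle i)

lemma range_coordProj (i : Fin n) : LinearMap.range (coordProj R i : SympSpace F n →ₗ[R] _) = ⊤ :=
  LinearMap.range_eq_top.mpr (Function.LeftInverse.surjective (coordProj_coordSingle i))

lemma ker_deleteCoord (i : Fin (m + 1)) :
    ker (deleteCoord R i : SympSpace F (m + 1) →ₗ[R] _) =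
      LinearMap.range (coordSingle R i) := by
  ext v
  constructor
  · intro hv
    have hsingle : ∀ f : Fin (m + 1) → F, f ∘ i.succAbove = 0 → Pi.single i (f i) = f :=
      fun f hf => funext fun j => by
        rcases i.eq_self_or_eq_succAbove j with rfl | ⟨j, rfl⟩
        · simp
        · simpa [i.succAbove_ne j] using (congrFun hf j).symm
    exact ⟨coordProj R i v, Prod.ext (hsingle _ (congrArg Prod.fst hv))
      (hsingle _ (congrArg Prod.snd hv))⟩
  · rintro ⟨z, rfl⟩
    ext j <;> simp [i.succAbove_ne j]

lemma disjoint_ker_coordProj_ker_deleteCoord (i : Fin (m + 1)) :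
    Disjoint (ker (coordProj R i : SympSpace F (m + 1) →ₗ[R] _))
      (ker (deleteCoord R i)) := by
  rw [Submodule.disjoint_def]
  intro v h1 h2
  rw [ker_deleteCoord] at h2
  obtain ⟨z, rfl⟩ := h2
  rw [LinearMap.mem_ker, coordProj_coordSingle] at h1
  rw [h1, map_zero]

end Coordinates

section Shortening

variable {k : Type*} {F : Type} [Field k] [Field F] [Algebra k F] {m n : ℕ}

lemma sympForm_deleteCoord (i : Fin (m + 1)) {u : SympSpace F (m + 1)} (hu : coordProj k i u = 0)
    (w : SympSpace F (m + 1)) :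
    sympForm k F m (deleteCoord k i u) (deleteCoord k i w) = sympForm k F (m + 1) u w := by
  obtain ⟨hu₁, hu₂⟩ := (coordProj_eq_zero_iff i u).mp hu
  simp only [sympForm_apply, deleteCoord_apply, Function.comp_apply]
  rw [Fin.sum_univ_succAbove _ i, hu₁, hu₂]
  simp

lemma finrank_ker_deleteCoord (i : Fin (m + 1)) :
    finrank k (ker (deleteCoord k i : SympSpace F (m + 1) →ₗ[k] _)) = finrank k (F × F) := by
  rw [ker_deleteCoord, LinearMap.finrank_range_of_inj (coordSingle_injective i)]

variable [FiniteDimensional k F]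

lemma finrank_ker_coordProj_add (i : Fin n) :
    finrank k (ker (coordProj k i : SympSpace F n →ₗ[k] _)) + finrank k (F × F) =
      finrank k (SympSpace F n) := by
  have := (coordProj k i : SympSpace F n →ₗ[k] F × F).finrank_range_add_finrank_ker
  rw [range_coordProj, finrank_top] at this
  omega

lemma finrank_sympSpace_succ :
    finrank k (SympSpace F (m + 1)) = finrank k (SympSpace F m) + finrank k (F × F) := by
  simp only [finrank_prod, finrank_pi_fintype, Finset.sum_const, Finset.card_univ,
    Fintype.card_fin, smul_eq_mul]
  ring

variable [Algebra.IsSeparable k F]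

lemma sympForm_nondegenerate :
    (sympForm k F n).Nondegenerate := by
  refine (sympForm_isRefl (k := k) (F := F) (n := n)).nondegenerate_iff_separatingLeft.mpr
    fun u hu => ?_
  have htrace : ∀ a : F, (∀ b : F, Algebra.trace k F (b * a) = 0) → a = 0 := fun a h =>
    (traceForm_nondegenerate k F).1 a fun b => by simpa [mul_comm] using h b
  have h1 : ∀ i, u.1 i = 0 := fun i => htrace _ fun b => by
    simpa [mul_comm] using (sympForm_apply_single u i 0 b).symm.trans (hu _)
  have h2 : ∀ i, u.2 i = 0 := fun i => htrace _ fun b => by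
    simpa using (sympForm_apply_single u i b 0).symm.trans (hu _)
  exact Prod.ext (funext h1) (funext h2)

lemma orthogonal_ker_coordProj (i : Fin (m + 1)) :
    (sympForm k F (m + 1)).orthogonal (ker (coordProj k i)) = ker (deleteCoord k i) := by
  have hle : ker (deleteCoord k i) ≤ (sympForm k F (m + 1)).orthogonal (ker (coordProj k i)) := by
    rintro _ hv u hu
    obtain ⟨⟨a, b⟩, rfl⟩ := (ker_deleteCoord i).le hv
    obtain ⟨hu₁, hu₂⟩ := (coordProj_eq_zero_iff i u).mp hu
    simp [coordSingle_apply, sympForm_apply_single, hu₁, hu₂]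
  refine (Submodule.eq_of_le_of_finrank_le hle ?_).symm
  rw [LinearMap.BilinForm.finrank_orthogonal sympForm_nondegenerate, finrank_ker_deleteCoord,
    ← finrank_ker_coordProj_add i]
  omega

lemma ker_coordProj_eq_orthogonal (i : Fin (m + 1)) :
    ker (coordProj k i) = (sympForm k F (m + 1)).orthogonal (ker (deleteCoord k i)) := by
  rw [← orthogonal_ker_coordProj, LinearMap.BilinForm.orthogonal_orthogonal sympForm_nondegenerate
    sympForm_isRefl]

variable (i : Fin (m + 1)) {A : Submodule k (SympSpace F (m + 1))}

lemma finrank_shorten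
    (hA : Disjoint ((sympForm k F (m + 1)).orthogonal A) (ker (deleteCoord k i))) :
    finrank k (shorten k i A) + finrank k (F × F) = finrank k A := by
  set B := sympForm k F (m + 1)
  have hinf : A ⊓ ker (coordProj k i) = B.orthogonal (B.orthogonal A ⊔ ker (deleteCoord k i)) := by
    rw [LinearMap.BilinForm.orthogonal_sup, ker_coordProj_eq_orthogonal,
      LinearMap.BilinForm.orthogonal_orthogonal sympForm_nondegenerate sympForm_isRefl]
  have hsup := Submodule.finrank_sup_add_finrank_inf_eq (B.orthogonal A) (ker (deleteCoord k i))
  rw [hA.eq_bot, finrank_bot, add_zero, finrank_ker_deleteCoord,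
    LinearMap.BilinForm.finrank_orthogonal sympForm_nondegenerate] at hsup
  rw [shorten, Submodule.finrank_map_of_disjoint_ker _
    ((disjoint_ker_coordProj_ker_deleteCoord i).mono_left inf_le_right), hinf,
    LinearMap.BilinForm.finrank_orthogonal sympForm_nondegenerate]
  have := Submodule.finrank_le A
  have := Submodule.finrank_le (B.orthogonal A ⊔ ker (deleteCoord k i))
  omega

lemma orthogonal_shorten
    (hA : Disjoint ((sympForm k F (m + 1)).orthogonal A) (ker (deleteCoord k i))) :
    (sympForm k F m).orthogonal (shorten k i A) =
      ((sympForm k F (m + 1)).orthogonal A).map (deleteCoord k i) := by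
  have hle : ((sympForm k F (m + 1)).orthogonal A).map (deleteCoord k i) ≤
      (sympForm k F m).orthogonal (shorten k i A) := by
    rintro _ ⟨w, hw, rfl⟩ _ ⟨u, ⟨huA, huK⟩, rfl⟩
    rw [sympForm_deleteCoord i huK]
    exact hw u huA
  refine (Submodule.eq_of_le_of_finrank_le hle ?_).symm
  rw [LinearMap.BilinForm.finrank_orthogonal sympForm_nondegenerate,
    Submodule.finrank_map_of_disjoint_ker _ hA,
    LinearMap.BilinForm.finrank_orthogonal sympForm_nondegenerate]
  have := finrank_shorten i hA
  have := finrank_sympSpace_succ (k := k) (F := F) (m := m)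
  omega

lemma shorten_inf_orthogonal
    (hA : Disjoint (A ⊔ (sympForm k F (m + 1)).orthogonal A) (ker (deleteCoord k i))) :
    shorten k i A ⊓ (sympForm k F m).orthogonal (shorten k i A) =
      shorten k i (A ⊓ (sympForm k F (m + 1)).orthogonal A) := by
  rw [orthogonal_shorten i (hA.mono_left le_sup_right), shorten,
    ← Submodule.map_inf_of_disjoint_ker _ (hA.mono_left (sup_le_sup_right inf_le_left _)), shorten,
    inf_right_comm]

lemma card_shorten [Finite k]
    (hA : Disjoint ((sympForm k F (m + 1)).orthogonal A) (ker (deleteCoord k i))) :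
    Nat.card (shorten k i A) * Nat.card F ^ 2 = Nat.card A := by
  rw [sq, ← Nat.card_prod, natCard_eq_pow_finrank (K := k) (V := shorten k i A),
    natCard_eq_pow_finrank (K := k) (V := F × F), natCard_eq_pow_finrank (K := k) (V := A),
    ← pow_add, finrank_shorten i hA]

end Shortening

section Weight

variable {R : Type*} {F : Type} [Ring R] [Field F] [Module R F] {m n : ℕ}

def sympSupport (v : SympSpace F n) : Set (Fin n) := {i | ¬(v.1 i = 0 ∧ v.2 i = 0)}

lemma swt_eq_ncard_sympSupport (v : SympSpace F n) : swt v = (sympSupport v).ncard := rfl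

lemma swt_zero : swt (0 : SympSpace F n) = 0 := by
  simp [swt]

lemma sympSupport_nonempty {v : SympSpace F n} (hv : v ≠ 0) : (sympSupport v).Nonempty := by
  contrapose! hv
  exact Prod.ext (funext fun i => by_contra fun h => hv.subset fun h' => h h'.1)
    (funext fun i => by_contra fun h => hv.subset fun h' => h h'.2)

lemma swt_deleteCoord (i : Fin (m + 1)) (v : SympSpace F (m + 1)) :
    swt (deleteCoord R i v) = (sympSupport v \ {i}).ncard := by
  have hsupp : sympSupport (deleteCoord R i v) = i.succAbove ⁻¹' sympSupport v := rfl
  rw [swt_eq_ncard_sympSupport, hsupp,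
    ← Set.ncard_image_of_injective _ Fin.succAbove_right_injective,
    Set.image_preimage_eq_inter_range, Fin.range_succAbove, ← Set.sdiff_eq]

lemma swt_deleteCoord_of_coordProj_eq_zero {i : Fin (m + 1)} {v : SympSpace F (m + 1)}
    (hv : coordProj R i v = 0) : swt (deleteCoord R i v) = swt v := by
  rw [swt_deleteCoord,
    Set.sdiff_singleton_eq_self (not_not.mpr ((coordProj_eq_zero_iff i v).mp hv)),
    swt_eq_ncard_sympSupport]

lemma swt_deleteCoord_add_one {i : Fin (m + 1)} {v : SympSpace F (m + 1)}
    (hi : i ∈ sympSupport v) : swt (deleteCoord R i v) + 1 = swt v := by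
  rw [swt_deleteCoord, Set.ncard_sdiff_singleton_add_one hi, swt_eq_ncard_sympSupport]

lemma swt_le_swt_deleteCoord_add_one (i : Fin (m + 1)) (v : SympSpace F (m + 1)) :
    swt v ≤ swt (deleteCoord R i v) + 1 := by
  rw [swt_deleteCoord, swt_eq_ncard_sympSupport]
  simpa using Set.ncard_le_ncard_sdiff_add_ncard (sympSupport v) {i}

lemma disjoint_ker_deleteCoord_of_two_le_swt (i : Fin (m + 1))
    (S : Submodule R (SympSpace F (m + 1))) (hS : ∀ v ∈ S, v ≠ 0 → 2 ≤ swt v) : Disjoint S (ker (deleteCoord R i)) := by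
  refine Submodule.disjoint_def.mpr fun v hvS hvE => by_contra fun hv0 => ?_
  have := swt_le_swt_deleteCoord_add_one (R := R) i v
  rw [LinearMap.mem_ker.mp hvE, swt_zero] at this
  exact absurd (hS v hvS hv0) (by omega)

lemma pureTo_shorten {A : Submodule R (SympSpace F (m + 1))} {d : ℕ} (hA : PureTo A.toAddSubgroup d)
    (i : Fin (m + 1)) : PureTo (shorten R i A).toAddSubgroup d := by
  rintro _ ⟨u, ⟨huA, huK⟩, rfl⟩ hu0
  rw [swt_deleteCoord_of_coordProj_eq_zero huK]
  exact hA u huA fun h => hu0 (h ▸ map_zero _)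

end Weight

section Codes

variable {p : ℕ} {F : Type} [Field F] {n : ℕ}

lemma minSwt_le {S : Set (SympSpace F n)} {v : SympSpace F n} (hv : v ∈ S) (hv0 : v ≠ 0) :
    minSwt S ≤ swt v :=
  Nat.sInf_le ⟨v, ⟨hv, hv0⟩, rfl⟩

lemma exists_swt_eq_minSwt {S : Set (SympSpace F n)} (h : minSwt S ≠ 0) :
    ∃ v ∈ S, v ≠ 0 ∧ swt v = minSwt S := by
  have hne : (swt '' (S \ {0})).Nonempty :=
    Set.nonempty_iff_ne_empty.mpr fun he => h (by rw [minSwt, he, Nat.sInf_empty])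
  obtain ⟨v, ⟨hv, hv0⟩, hvd⟩ := Nat.sInf_mem hne
  exact ⟨v, hv, hv0, hvd⟩

lemma minSwt_eq {S : Set (SympSpace F n)} {w : SympSpace F n} {d : ℕ} (hw : w ∈ S) (hw0 : w ≠ 0)
    (hwd : swt w = d) (h : ∀ v ∈ S, v ≠ 0 → d ≤ swt v) : minSwt S = d :=
  le_antisymm (hwd ▸ minSwt_le hw hw0)
    (le_csInf ⟨_, w, ⟨hw, hw0⟩, rfl⟩ fun _ ⟨v, ⟨hv, hv0⟩, hvd⟩ => hvd ▸ h v hv hv0)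

variable [Fintype F] [CharP F p] {K R d : ℕ} {C : AddSubgroup (SympSpace F n)}

lemma IsSubsysCode.le_swt (hC : IsSubsysCode p C K R d) (hpure : PureTo C d) {v : SympSpace F n}
    (hv : v ∈ sympDual p (↑C ∩ sympDual p ↑C)) (hv0 : v ≠ 0) : d ≤ swt v := by
  by_cases hvC : v ∈ C
  · exact hpure v hvC hv0
  · rw [hC.2.2.2 fun h => hvC (by rw [h] at hv; exact hv)]
    exact minSwt_le ⟨hv, hvC⟩ hv0

lemma IsSubsysCode.exists_swt_eq (hC : IsSubsysCode p C K R d) (hd : d ≠ 0) :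
    ∃ w ∈ sympDual p (↑C ∩ sympDual p ↑C : Set (SympSpace F n)), w ≠ 0 ∧ swt w = d := by
  obtain ⟨-, -, hdeg, hdist⟩ := hC
  by_cases hXC : sympDual p (↑C ∩ sympDual p ↑C) = (C : Set (SympSpace F n))
  · obtain ⟨w, hw, hw0, hwd⟩ := exists_swt_eq_minSwt (hdeg hXC ▸ hd)
    exact ⟨w, hw, hw0, hwd.trans (hdeg hXC).symm⟩
  · obtain ⟨w, hw, hw0, hwd⟩ := exists_swt_eq_minSwt (hdist hXC ▸ hd)
    exact ⟨w, hw.1, hw0, hwd.trans (hdist hXC).symm⟩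

variable [Algebra (ZMod p) F]

lemma trSympForm_eq_sympForm (u v : SympSpace F n) :
    trSympForm p u v = sympForm (ZMod p) F n u v := by
  obtain rfl : ‹Algebra (ZMod p) F› = ZMod.algebra F p := Subsingleton.elim _ _
  rfl

lemma sympDual_coe (A : Submodule (ZMod p) (SympSpace F n)) :
    sympDual p (A : Set (SympSpace F n)) = (sympForm (ZMod p) F n).orthogonal A := by
  ext v
  simp only [sympDual, trSympForm_eq_sympForm, Set.mem_ofPred_eq, SetLike.mem_coe,
    LinearMap.BilinForm.mem_orthogonal_iff]
  exact ⟨fun h w hw => sympForm_isRefl _ _ (h w hw), fun h w hw => sympForm_isRefl _ _ (h w hw)⟩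

lemma coe_inter_sympDual (A : Submodule (ZMod p) (SympSpace F n)) :
    (A : Set (SympSpace F n)) ∩ sympDual p A = ↑(A ⊓ (sympForm (ZMod p) F n).orthogonal A) := by
  rw [sympDual_coe, Submodule.coe_inf]

lemma isSubsysCode_of_witness {C : Submodule (ZMod p) (SympSpace F n)} {w : SympSpace F n}
    (hcard₁ : Nat.card ↥(C ⊓ (sympForm (ZMod p) F n).orthogonal C) * (K * R) = Fintype.card F ^ n)
    (hcard₂ : Nat.card C * K = Fintype.card F ^ n * R)
    (hw : w ∈ (sympForm (ZMod p) F n).orthogonal (C ⊓ (sympForm (ZMod p) F n).orthogonal C))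
    (hwC : w ∉ C) (hw0 : w ≠ 0) (hwd : swt w = d)
    (hmin : ∀ v ∈ (sympForm (ZMod p) F n).orthogonal (C ⊓ (sympForm (ZMod p) F n).orthogonal C),
      v ≠ 0 → d ≤ swt v) :
    IsSubsysCode p C.toAddSubgroup K R d := by
  simp only [IsSubsysCode, Submodule.coe_toAddSubgroup]
  rw [coe_inter_sympDual, sympDual_coe]
  exact ⟨hcard₁, hcard₂, fun h => absurd (SetLike.coe_injective h ▸ hw) hwC,
    fun _ => Eq.symm (minSwt_eq ⟨hw, hwC⟩ hw0 hwd fun v hv => hmin v hv.1)⟩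

end Codes

theorem isSubsysCode_shorten {p : ℕ} [Fact p.Prime] {F : Type} [Field F] [Fintype F] [CharP F p]
    [Algebra (ZMod p) F] {m K R d : ℕ} {C : Submodule (ZMod p) (SympSpace F (m + 1))}
    (hC : IsSubsysCode p C.toAddSubgroup K R d) (hpure : PureTo C.toAddSubgroup d) (hd : 2 ≤ d)
    {w : SympSpace F (m + 1)} (hw : w ∈ sympDual p (↑C ∩ sympDual p ↑C)) (hwd : swt w = d)
    {i : Fin (m + 1)} (hi : i ∈ sympSupport w) :
    IsSubsysCode p (shorten (ZMod p) i C).toAddSubgroup (Fintype.card F * K) R (d - 1) := by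
  set B := sympForm (ZMod p) F (m + 1)
  set D := C ⊓ B.orthogonal C
  have hX : sympDual p (↑C ∩ sympDual p ↑C) = (B.orthogonal D : Set (SympSpace F (m + 1))) := by
    rw [coe_inter_sympDual, sympDual_coe]
  have hXwt : ∀ v ∈ B.orthogonal D, v ≠ 0 → d ≤ swt v := fun v hv hv0 =>
    hC.le_swt hpure (hX ▸ hv) hv0
  have hXE : Disjoint (B.orthogonal D) (ker (deleteCoord (ZMod p) i)) :=
    disjoint_ker_deleteCoord_of_two_le_swt i _ fun v hv hv0 => hd.trans (hXwt v hv hv0)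
  have hCE : Disjoint (C ⊔ B.orthogonal C) (ker (deleteCoord (ZMod p) i)) :=
    hXE.mono_left <| sup_le
      ((LinearMap.BilinForm.le_orthogonal_orthogonal sympForm_isRefl).trans
        (LinearMap.BilinForm.orthogonal_le inf_le_right))
      (LinearMap.BilinForm.orthogonal_le inf_le_left)
  have hX' := orthogonal_shorten i hXE
  rw [← shorten_inf_orthogonal i hCE] at hX'
  have hw' : swt (deleteCoord (ZMod p) i w) = d - 1 := by
    have := swt_deleteCoord_add_one (R := ZMod p) hi
    omega
  have hw'0 : deleteCoord (ZMod p) i w ≠ 0 := fun h => by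
    rw [h, swt_zero] at hw'
    omega
  have hw'C : deleteCoord (ZMod p) i w ∉ shorten (ZMod p) i C := fun h => by
    have := pureTo_shorten hpure i _ h hw'0
    omega
  have hwX : w ∈ B.orthogonal D := by
    rw [← SetLike.mem_coe, ← hX]
    exact hw
  obtain ⟨hcard₁, hcard₂, -, -⟩ := hC
  simp only [Submodule.coe_toAddSubgroup] at hcard₁
  rw [coe_inter_sympDual] at hcard₁
  have hq : 0 < Fintype.card F := Fintype.card_pos
  have hcardD := card_shorten i hXE
  have hcardC := card_shorten i (hCE.mono_left le_sup_right)
  rw [Nat.card_eq_fintype_card (α := F)] at hcardD hcardC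
  refine isSubsysCode_of_witness ?_ ?_ (hX' ▸ Submodule.mem_map_of_mem hwX) hw'C hw'0 hw' ?_
  · rw [shorten_inf_orthogonal i hCE]
    simpa only [mul_assoc, mul_one] using
      Nat.mul_mul_eq_of_mul_sq_eq hq hcardD (hcard₁.trans (mul_one _).symm)
  · exact Nat.mul_mul_eq_of_mul_sq_eq hq hcardC hcard₂
  · rw [hX']
    rintro _ ⟨v, hv, rfl⟩ hv0
    have := hXwt v hv fun h => hv0 (h ▸ map_zero _)
    have := swt_le_swt_deleteCoord_add_one (R := ZMod p) i v
    omega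

theorem shortening_subsystem_codes_general
    (p : ℕ) (F : Type) [Field F] [Fintype F] [CharP F p]
    (n K R d : ℕ) (hd : 2 ≤ d)
    (h : ∃ C : AddSubgroup ((Fin n → F) × (Fin n → F)),
      IsSubsysCode p C K R d ∧ PureTo C d) :
    ∃ C : AddSubgroup ((Fin (n - 1) → F) × (Fin (n - 1) → F)),
      IsSubsysCode p C (Fintype.card F * K) R (d - 1) ∧ PureTo C (d - 1) := by
  have : Fact p.Prime := ⟨CharP.char_is_prime F p⟩
  let : Algebra (ZMod p) F := ZMod.algebra F p
  obtain ⟨C, hC, hpure⟩ := h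
  obtain ⟨w, hw, hw0, hwd⟩ := hC.exists_swt_eq (by omega)
  obtain ⟨i, hi⟩ := sympSupport_nonempty hw0
  cases n with
  | zero => exact i.elim0
  | succ m =>
    exact ⟨_, isSubsysCode_shorten (C := AddSubgroup.toZModSubmodule p C) hC hpure hd hw hwd hi,
      fun v hv hv0 => (Nat.sub_le d 1).trans (pureTo_shorten hpure i v hv hv0)⟩

/-- Shortening subsystem codes.  If there exists a pure
`((n,K,R,d))_q` Clifford subsystem code with `n ≥ 2` and `d ≥ 2`, then there
exists a pure `((n−1, qK, R, d−1))_q` Clifford subsystem code. -/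
theorem shortening_subsystem_codes
    (p : ℕ) (hp : p.Prime) (F : Type) [Field F] [Fintype F] [CharP F p]
    (n K R d : ℕ) (hn : 2 ≤ n) (hd : 2 ≤ d)
    (h : ∃ C : AddSubgroup ((Fin n → F) × (Fin n → F)),
      IsSubsysCode p C K R d ∧ PureTo C d) :
    ∃ C : AddSubgroup ((Fin (n - 1) → F) × (Fin (n - 1) → F)),
      IsSubsysCode p C (Fintype.card F * K) R (d - 1) ∧ PureTo C (d - 1) :=
  shortening_subsystem_codes_general p F n K R d hd h
end
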